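/- Let ψ be a homeomorphism of ℝ² with M := ‖ψ‖_* < ∞, let x₀ ∈ ℝ² and r > 0. Then ψ(B(x₀,r)) ⊂ B(ψ(x₀), g_ψ(r)/4); consequently, for every ball B' = B(c,ρ) contained in ψ(B(x₀,r)), the dilated ball 4B' = B(c,4ρ) is contained in B(ψ(x₀), g_ψ(r)). -/

import Mathlib

open MeasureTheory Metric Real
open scoped ENNReal

noncomputable section

abbrev E2 := EuclideanSpace ℝ (Fin 2)

/-- The comparison function `Φ`. -/
def Phi (r s : ℝ) : ℝ :=
  if 0 ≤ (1 - s) * (1 - r) then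
    max ((1 + |Real.log s|) / (1 + |Real.log r|)) ((1 + |Real.log r|) / (1 + |Real.log s|))
  else (1 + |Real.log s|) * (1 + |Real.log r|)

/-- `‖ψ‖_* = sup_{x ≠ y} Φ(|ψ(x)-ψ(y)|, |x-y|)`, a supremum taken in `[0,∞]`. -/
def starNorm (ψ : E2 → E2) : ℝ≥0∞ :=
  ⨆ (x : E2) (y : E2) (_ : x ≠ y), ENNReal.ofReal (Phi (dist (ψ x) (ψ y)) (dist x y))

/-- `g_ψ(r)` with `M = ‖ψ‖_*`: `4e^M r^M` if `r ≥ 1`, `4 max{e r^{1/M}, e^M r}` if `0 < r < 1`. -/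
def gFun (M r : ℝ) : ℝ :=
  if 1 ≤ r then 4 * Real.exp M * r ^ M
  else 4 * max (Real.exp 1 * r ^ (1 / M)) (Real.exp M * r)

/-! In logarithmic coordinates `a = log |ψ x - ψ x₀|`, `b = log |x - x₀| < log r`, the bound
`Φ ≤ M` says `1 + |a| ≤ M (1 + |b|)` and `1 + |b| ≤ M (1 + |a|)` when `a` and `b` have the same
sign, and `(1 + |a|)(1 + |b|) ≤ M` otherwise; in each case an elementary estimate puts `a` below
`log (g_ψ(r)/4)`. For the dilated balls: if `B(c, ρ) ⊆ B(z, R)` in a real normed space, the point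
of the closed ball `B̄(c, ρ)` farthest from `z` shows `|c - z| + ρ ≤ R`, an inequality that
survives multiplying `ρ` and `R` by `4`. -/

lemma one_le_Phi (r s : ℝ) : 1 ≤ Phi r s := by
  have hr : 0 < 1 + |log r| := by positivity
  have hs : 0 < 1 + |log s| := by positivity
  unfold Phi
  split_ifs
  · rcases le_total (1 + |log r|) (1 + |log s|) with h | h
    · exact le_max_of_le_left ((one_le_div hr).mpr h)
    · exact le_max_of_le_right ((one_le_div hs).mpr h)
  · nlinarith [abs_nonneg (log r), abs_nonneg (log s)]

lemma Phi_le_starNorm {ψ : E2 → E2} (hfin : starNorm ψ ≠ ⊤) {x y : E2} (hxy : x ≠ y) :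
    Phi (dist (ψ x) (ψ y)) (dist x y) ≤ (starNorm ψ).toReal := by
  have h : ENNReal.ofReal (Phi (dist (ψ x) (ψ y)) (dist x y)) ≤ starNorm ψ :=
    le_iSup_of_le x (le_iSup_of_le y (le_iSup_of_le hxy le_rfl))
  simpa [ENNReal.toReal_ofReal (zero_le_one.trans (one_le_Phi _ _))] using
    ENNReal.toReal_mono hfin h

lemma one_le_starNorm_toReal {ψ : E2 → E2} (hfin : starNorm ψ ≠ ⊤) :
    1 ≤ (starNorm ψ).toReal := by
  obtain ⟨x, y, hxy⟩ := exists_pair_ne E2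
  exact (one_le_Phi _ _).trans (Phi_le_starNorm hfin hxy)

lemma Phi_le_of_same_sign {M d s : ℝ} (hsign : 0 ≤ (1 - s) * (1 - d)) (h : Phi d s ≤ M) :
    1 + |log d| ≤ M * (1 + |log s|) ∧ 1 + |log s| ≤ M * (1 + |log d|) := by
  rw [Phi, if_pos hsign, max_le_iff, div_le_iff₀ (by positivity), div_le_iff₀ (by positivity)]
    at h
  exact h.symm

lemma Phi_le_of_opposite_sign {M d s : ℝ} (hsign : (1 - s) * (1 - d) < 0) (h : Phi d s ≤ M) :
    (1 + |log s|) * (1 + |log d|) ≤ M := by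
  rwa [Phi, if_neg hsign.not_ge] at h

lemma gFun_pos (M : ℝ) {r : ℝ} (hr : 0 < r) : 0 < gFun M r := by
  unfold gFun
  split_ifs
  · positivity
  · exact mul_pos four_pos (lt_max_of_lt_right (by positivity))

lemma gFun_div_four_eq_exp (M : ℝ) {r : ℝ} (hr : 0 < r) :
    gFun M r / 4 =
      exp (if 1 ≤ r then M * (1 + log r) else max (1 + log r / M) (M + log r)) := by
  unfold gFun
  split_ifs
  · rw [rpow_def_of_pos hr, mul_assoc, ← exp_add, mul_div_cancel_left₀ _ four_ne_zero]
    ring_nf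
  · rw [exp_monotone.map_max, exp_add, exp_add, exp_log hr, rpow_def_of_pos hr]
    ring_nf

lemma log_lt_of_Phi_le {M d s r : ℝ} (hM : 1 ≤ M) (hd : 0 < d) (hs : 0 < s) (hsr : s < r)
    (h : Phi d s ≤ M) :
    log d < if 1 ≤ r then M * (1 + log r) else max (1 + log r / M) (M + log r) := by
  have hlog : log s < log r := log_lt_log hs hsr
  split_ifs with hr
  · have hlogr : 0 ≤ log r := log_nonneg hr
    have hlogd := le_abs_self (log d)
    by_cases hsign : 0 ≤ (1 - s) * (1 - d)
    · obtain ⟨hds, -⟩ := Phi_le_of_same_sign hsign h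
      rcases le_or_gt 1 s with hs1 | hs1
      · rw [abs_of_nonneg (log_nonneg hs1)] at hds
        nlinarith
      · have : log d ≤ 0 := log_nonpos hd.le (by nlinarith)
        nlinarith
    · have := Phi_le_of_opposite_sign (not_le.mp hsign) h
      nlinarith [abs_nonneg (log s), abs_nonneg (log d)]
  · have hs1 : s < 1 := hsr.trans (not_le.mp hr)
    have hlogs : log s < 0 := log_neg hs hs1
    by_cases hsign : 0 ≤ (1 - s) * (1 - d)
    · obtain ⟨-, hsd⟩ := Phi_le_of_same_sign hsign h
      have hlogd : log d ≤ 0 := log_nonpos hd.le (by nlinarith)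
      rw [abs_of_nonpos hlogd, abs_of_neg hlogs] at hsd
      refine lt_max_of_lt_left ?_
      rw [← sub_lt_iff_lt_add', lt_div_iff₀ (by linarith)]
      nlinarith
    · have hlogd : 0 < log d := log_pos (by nlinarith)
      have := Phi_le_of_opposite_sign (not_le.mp hsign) h
      rw [abs_of_pos hlogd, abs_of_neg hlogs] at this
      exact lt_max_of_lt_right (by nlinarith)

lemma lt_gFun_div_four_of_Phi_le {M d s r : ℝ} (hM : 1 ≤ M) (hd : 0 < d) (hs : 0 < s)
    (hsr : s < r) (h : Phi d s ≤ M) : d < gFun M r / 4 := by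
  rw [gFun_div_four_eq_exp M (hs.trans hsr), ← exp_log hd]
  exact exp_lt_exp.mpr (log_lt_of_Phi_le hM hd hs hsr h)

section NormedSpace

variable {E : Type*} [NormedAddCommGroup E] [NormedSpace ℝ E]

lemma exists_norm_eq_sameRay [Nontrivial E] (x : E) {t : ℝ} (ht : 0 ≤ t) :
    ∃ v : E, ‖v‖ = t ∧ SameRay ℝ x v := by
  rcases eq_or_ne x 0 with rfl | hx
  · obtain ⟨v, hv⟩ := exists_norm_eq E ht
    exact ⟨v, hv, SameRay.zero_left v⟩
  · refine ⟨(t / ‖x‖) • x, ?_, SameRay.sameRay_nonneg_smul_right x (by positivity)⟩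
    rw [norm_smul, norm_div, norm_norm, Real.norm_of_nonneg ht,
      div_mul_cancel₀ _ (norm_ne_zero_iff.mpr hx)]

lemma dist_add_le_of_ball_subset [Nontrivial E] {c z : E} {ρ R : ℝ} (hρ : 0 < ρ)
    (h : ball c ρ ⊆ ball z R) : dist c z + ρ ≤ R := by
  obtain ⟨v, hv, hray⟩ := exists_norm_eq_sameRay (c - z) hρ.le
  have hfar : c + v ∈ closure (ball z R) :=
    closure_mono h (by rw [closure_ball c hρ.ne']; simp [hv])
  have := closure_ball_subset_closedBall hfar
  rwa [mem_closedBall, dist_eq_norm, add_sub_right_comm, hray.norm_add, hv, ← dist_eq_norm]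
    at this

lemma ball_mul_subset_ball_mul [Nontrivial E] {c z : E} {ρ R k : ℝ} (hk : 1 ≤ k)
    (h : ball c ρ ⊆ ball z R) : ball c (k * ρ) ⊆ ball z (k * R) := by
  rcases le_or_gt ρ 0 with hρ | hρ
  · rw [ball_eq_empty.mpr (mul_nonpos_of_nonneg_of_nonpos (by linarith) hρ)]
    exact Set.empty_subset _
  · have := dist_add_le_of_ball_subset hρ h
    exact ball_subset_ball' (by nlinarith [dist_nonneg (x := c) (y := z)])

end NormedSpace

theorem image_ball_subset_general (ψ : E2 ≃ₜ E2) (hfin : starNorm ψ ≠ ⊤)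
    (x₀ : E2) (r : ℝ) :
    (⇑ψ '' ball x₀ r ⊆ ball (ψ x₀) (gFun (starNorm ψ).toReal r / 4)) ∧
    ∀ (c : E2) (ρ : ℝ), ball c ρ ⊆ ⇑ψ '' ball x₀ r →
      ball c (4 * ρ) ⊆ ball (ψ x₀) (gFun (starNorm ψ).toReal r) := by
  set M := (starNorm ψ).toReal
  have himage : ⇑ψ '' ball x₀ r ⊆ ball (ψ x₀) (gFun M r / 4) := by
    rintro _ ⟨x, hx, rfl⟩
    rcases eq_or_ne x x₀ with rfl | hne
    · exact mem_ball_self (div_pos (gFun_pos M (pos_of_mem_ball hx)) four_pos)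
    · exact lt_gFun_div_four_of_Phi_le (one_le_starNorm_toReal hfin)
        (dist_pos.mpr (ψ.injective.ne hne)) (dist_pos.mpr hne) hx (Phi_le_starNorm hfin hne)
  refine ⟨himage, fun c ρ hsub => ?_⟩
  simpa only [mul_div_cancel₀ _ (four_ne_zero' ℝ)] using
    ball_mul_subset_ball_mul (k := 4) (by norm_num) (hsub.trans himage)

/-- `ψ(B(x₀,r)) ⊆ B(ψ(x₀), g_ψ(r)/4)`, hence every ball `B' ⊆ ψ(B(x₀,r))`
satisfies `4B' ⊆ B(ψ(x₀), g_ψ(r))`. -/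
theorem image_ball_subset (ψ : E2 ≃ₜ E2) (hfin : starNorm ψ ≠ ⊤)
    (x₀ : E2) (r : ℝ) (hr : 0 < r) :
    (⇑ψ '' ball x₀ r ⊆ ball (ψ x₀) (gFun (starNorm ψ).toReal r / 4)) ∧
    ∀ (c : E2) (ρ : ℝ), ball c ρ ⊆ ⇑ψ '' ball x₀ r →
      ball c (4 * ρ) ⊆ ball (ψ x₀) (gFun (starNorm ψ).toReal r) :=
  image_ball_subset_general ψ hfin x₀ r
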